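/- Let ν_ij (i,j ∈ {1,…,m}) be positive regular Borel measures on (−∞,0] with finite total variation, ν_ij({0}) = 0, and Σ_{j=1}^m ν_ij((−∞,0]) < 1 for each i. Then the operator D: BU → ℝ^m defined by D_i x = x_i(0) − Σ_{j=1}^m ∫_{−∞}^0 x_j(s) dν_ij(s) is stable. -/

import Mathlib

open MeasureTheory Filter Set

/-- `x` is bounded and uniformly continuous on `(-∞,0]` (membership in `BU`,
where only the restriction of `x` to `(-∞,0]` is relevant). -/
def IsBU (m : ℕ) (x : ℝ → Fin m → ℝ) : Prop :=
  (∃ C : ℝ, ∀ s : ℝ, s ≤ 0 → ‖x s‖ ≤ C) ∧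
  ∀ ε > (0:ℝ), ∃ δ > (0:ℝ), ∀ s : ℝ, s ≤ 0 → ∀ s' : ℝ, s' ≤ 0 →
    |s - s'| < δ → ‖x s - x s'‖ < ε

/-- the supremum norm `‖x‖_∞ = sup_{s ≤ 0} ‖x(s)‖`. -/
noncomputable def supNorm (m : ℕ) (x : ℝ → Fin m → ℝ) : ℝ :=
  ⨆ s : Set.Iic (0:ℝ), ‖x (s : ℝ)‖

/-- time shift: `shift m x t = x_t`, where `x_t(s) = x(t+s)`. -/
def shift (m : ℕ) (x : ℝ → Fin m → ℝ) (t : ℝ) : ℝ → Fin m → ℝ :=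
  fun s => x (t + s)

/-- The operator `Dx = x(0) - ∫_{-∞}^0 [dν(s)] x(s)`, where the matrix of real
(signed) Borel measures `ν` is given through a positive part `νp` and a
negative part `νn` (Jordan decomposition), i.e. `ν i j = νp i j - νn i j`. -/
noncomputable def Dop (m : ℕ) (νp νn : Fin m → Fin m → Measure ℝ)
    (x : ℝ → Fin m → ℝ) : Fin m → ℝ :=
  fun i => x 0 i - ∑ j : Fin m,
    ((∫ s in Set.Iic (0:ℝ), x s j ∂(νp i j)) - ∫ s in Set.Iic (0:ℝ), x s j ∂(νn i j))

/-- the measures `ν_ij` have finite total variation and `|ν_ij|({0}) = 0`. -/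
def NuCond (m : ℕ) (νp νn : Fin m → Fin m → Measure ℝ) : Prop :=
  (∀ i j, νp i j Set.univ ≠ ⊤) ∧ (∀ i j, νn i j Set.univ ≠ ⊤) ∧
  (∀ i j, νp i j {0} = 0) ∧ (∀ i j, νn i j {0} = 0)

/-- `D` is stable: there is a continuous `c : [0,∞) → [0,∞)` with `c(t) → 0`
as `t → ∞` such that every continuous `x : ℝ → ℝ^m` with `x_0 ∈ BU` and
`D x_t = 0` for all `t ≥ 0` satisfies `‖x(t)‖ ≤ c(t) ‖x_0‖_∞` for all `t ≥ 0`. -/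
def IsStableOp (m : ℕ) (D : (ℝ → Fin m → ℝ) → Fin m → ℝ) : Prop :=
  ∃ c : ℝ → ℝ, ContinuousOn c (Set.Ici 0) ∧ (∀ t : ℝ, 0 ≤ t → 0 ≤ c t) ∧
    Filter.Tendsto c Filter.atTop (nhds 0) ∧
    ∀ x : ℝ → Fin m → ℝ, Continuous x → IsBU m x →
      (∀ t : ℝ, 0 ≤ t → D (shift m x t) = 0) →
      ∀ t : ℝ, 0 ≤ t → ‖x t‖ ≤ c t * supNorm m x

/-- the convolution operator `D̂`, `(D̂x)(s) = D x_s`. -/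
noncomputable def Dhat (m : ℕ) (νp νn : Fin m → Fin m → Measure ℝ)
    (x : ℝ → Fin m → ℝ) : ℝ → Fin m → ℝ :=
  fun s => Dop m νp νn (shift m x s)

/-- the seminorm `‖x‖_n = sup_{s ∈ [-n,0]} ‖x(s)‖`. -/
noncomputable def normOn (m : ℕ) (n : ℕ) (x : ℝ → Fin m → ℝ) : ℝ :=
  ⨆ s : Set.Icc (-(n:ℝ)) 0, ‖x (s : ℝ)‖

/-- the compact-open metric
`d(x,y) = ∑_{n ≥ 1} 2⁻ⁿ ‖x-y‖_n / (1 + ‖x-y‖_n)`. -/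
noncomputable def coDist (m : ℕ) (x y : ℝ → Fin m → ℝ) : ℝ :=
  ∑' n : ℕ, (1/2 : ℝ)^(n+1) *
    (normOn m (n+1) (fun s => x s - y s)) / (1 + normOn m (n+1) (fun s => x s - y s))

/-- `sup_{0 ≤ u ≤ t} ‖h(u)‖`. -/
noncomputable def supOn (m : ℕ) (h : ℝ → Fin m → ℝ) (t : ℝ) : ℝ :=
  ⨆ u : Set.Icc (0:ℝ) t, ‖h (u : ℝ)‖

/-- the order `x ≤_D y`, i.e. `D x_s ≤ D y_s` (componentwise) for all `s ≤ 0`. -/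
def leD (m : ℕ) (νp νn : Fin m → Fin m → Measure ℝ) (x y : ℝ → Fin m → ℝ) : Prop :=
  ∀ s : ℝ, s ≤ 0 → ∀ i, Dhat m νp νn x s i ≤ Dhat m νp νn y s i

open Topology

/-! For `t ≥ 0` a solution satisfies `x(t) = ∑ⱼ ∫ x_j(t+s) dν_ij(s)`, and every row mass
`∑ⱼ ν_ij((-∞,0])` is at most some `k < 1`. At a maximum of `‖x‖` on `[0,t]` this identity
gives `‖x‖ ≤ ‖x₀‖_∞` for all times. Splitting the integrals at `-T`, where the tails
`∑ⱼ ν_ij((-∞,-T])` are at most `δ`, gives `‖x(t)‖ ≤ k · sup_{(t-T,t]} ‖x‖ + δ ‖x₀‖_∞`, and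
iterating, `‖x(t)‖ ≤ (kⁿ + δ/(1-k)) ‖x₀‖_∞` for `t ≥ nT`. These decay times do not depend on
`x`, and a continuous `c` above the resulting dyadic step function is a series of cut-offs. -/

theorem exists_le_of_forall_lt_of_finite {ι : Type*} [Finite ι] {a : ι → ℝ} {b c : ℝ}
    (hcb : c < b) (ha : ∀ i, a i < b) : ∃ k, c ≤ k ∧ k < b ∧ ∀ i, a i ≤ k := by
  have hIco : ∀ᶠ k in 𝓝[<] b, k ∈ Ico c b := Ico_mem_nhdsLT hcb
  obtain ⟨k, ⟨hck, hkb⟩, hk⟩ :=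
    (hIco.and (eventually_all.2 fun i => Ioo_mem_nhdsLT (ha i))).exists
  exact ⟨k, hck, hkb, fun i => (hk i).1.le⟩

theorem exists_continuous_tendsto_zero_pow_le (T : ℕ → ℝ) :
    ∃ c : ℝ → ℝ, Continuous c ∧ (∀ t, 0 ≤ c t) ∧ Tendsto c atTop (𝓝 0) ∧
      ∀ n t, t < T n → (1 / 2 : ℝ) ^ n ≤ c t := by
  set ψ : ℕ → ℝ → ℝ := fun n t => min 1 (max 0 (T n + 1 - t))
  have hψ_nonneg (n : ℕ) (t : ℝ) : 0 ≤ ψ n t := le_min zero_le_one (le_max_left _ _)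
  have hψ_bound (n : ℕ) (t : ℝ) : ‖(1 / 2 : ℝ) ^ n * ψ n t‖ ≤ (1 / 2 : ℝ) ^ n := by
    rw [Real.norm_of_nonneg (by positivity)]
    exact mul_le_of_le_one_right (by positivity) (min_le_left _ _)
  have hsum (t : ℝ) : Summable fun n => (1 / 2 : ℝ) ^ n * ψ n t :=
    .of_norm_bounded summable_geometric_two (hψ_bound · t)
  refine ⟨fun t => ∑' n, (1 / 2 : ℝ) ^ n * ψ n t, ?_, fun t => ?_, ?_, fun n t ht => ?_⟩
  · exact continuous_tsum (fun n => by fun_prop) summable_geometric_two fun n t => hψ_bound n t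
  · exact tsum_nonneg fun n => mul_nonneg (by positivity) (hψ_nonneg n t)
  · have hlim := tendsto_tsum_of_dominated_convergence (𝓕 := atTop) (g := fun _ => (0 : ℝ))
      summable_geometric_two (fun n => ?_) (.of_forall fun t n => hψ_bound n t)
    · simpa only [tsum_zero] using hlim
    refine tendsto_const_nhds.congr' ?_
    filter_upwards [eventually_ge_atTop (T n + 1)] with t ht
    simp [ψ, ht]
  · have hψ_one : ψ n t = 1 := min_eq_left (le_max_of_le_right (by linarith))
    calc (1 / 2 : ℝ) ^ n = (1 / 2 : ℝ) ^ n * ψ n t := by rw [hψ_one, mul_one]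
      _ ≤ _ := (hsum t).le_tsum n fun j _ => mul_nonneg (by positivity) (hψ_nonneg j t)

theorem exists_continuous_decay_bound {ι : Type*} (g : ι → ℝ → ℝ) (M : ι → ℝ)
    (hM : ∀ i, 0 ≤ M i) (hbound : ∀ i t, 0 ≤ t → g i t ≤ M i)
    (hdecay : ∀ ε > 0, ∃ τ, ∀ i t, τ ≤ t → g i t ≤ ε * M i) :
    ∃ c : ℝ → ℝ, Continuous c ∧ (∀ t, 0 ≤ c t) ∧ Tendsto c atTop (𝓝 0) ∧
      ∀ i t, 0 ≤ t → g i t ≤ c t * M i := by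
  choose τ hτ using fun n : ℕ => hdecay ((1 / 2) ^ (n + 1)) (by positivity)
  set T : ℕ → ℝ := fun n => max (τ n) n
  obtain ⟨c, hc, hc_nonneg, hc_lim, hc_ge⟩ := exists_continuous_tendsto_zero_pow_le T
  refine ⟨c, hc, hc_nonneg, hc_lim, fun i t ht => ?_⟩
  -- the first `T n` beyond `t` tells which dyadic bound holds at time `t`
  have hex : ∃ n, t < T n := (exists_nat_gt t).imp fun n hn => hn.trans_le (le_max_right _ _)
  suffices ∃ n, t < T n ∧ g i t ≤ (1 / 2) ^ n * M i by
    obtain ⟨n, htn, hg⟩ := this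
    exact hg.trans (mul_le_mul_of_nonneg_right (hc_ge n t htn) (hM i))
  refine ⟨Nat.find hex, Nat.find_spec hex, ?_⟩
  rcases h : Nat.find hex with _ | n
  · simpa using hbound i t ht
  · have hTn : T n ≤ t := not_lt.1 (Nat.find_min hex (by omega))
    exact hτ n i t ((le_max_left _ _).trans hTn)

section DelayInequality

variable {f : ℝ → ℝ} {k M : ℝ}

theorem le_of_le_mul_of_past_le (hf : Continuous f) (hk : k < 1) (hM : 0 ≤ M)
    (hpast : ∀ s ≤ 0, f s ≤ M) (hstep : ∀ t, 0 ≤ t → ∀ B, (∀ s ≤ t, f s ≤ B) → f t ≤ k * B)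
    (t : ℝ) : f t ≤ M := by
  rcases le_total t 0 with ht | ht
  · exact hpast t ht
  obtain ⟨s₀, hs₀, hmax⟩ := isCompact_Icc.exists_isMaxOn (nonempty_Icc.2 ht) hf.continuousOn
  have hs₀_bound : ∀ s ≤ s₀, f s ≤ max M (f s₀) := fun s hs => by
    rcases le_total s 0 with hs' | hs'
    · exact le_max_of_le_left (hpast s hs')
    · exact le_max_of_le_right (hmax ⟨hs', hs.trans hs₀.2⟩)
  have hs₀_le : f s₀ ≤ M := by
    by_contra! hlt
    have := hstep s₀ hs₀.1 _ hs₀_bound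
    rw [max_eq_right hlt.le] at this
    nlinarith
  exact (hmax ⟨ht, le_rfl⟩).trans hs₀_le

theorem le_pow_add_of_delay_le {δ T : ℝ} (hk₀ : 0 ≤ k) (hk : k < 1) (hδ : 0 ≤ δ) (hT : 0 ≤ T)
    (hM : 0 ≤ M) (hle : ∀ t, 0 ≤ t → f t ≤ M)
    (hstep : ∀ t, 0 ≤ t → ∀ B, 0 ≤ B → (∀ s ∈ Ioc (t - T) t, f s ≤ B) → f t ≤ k * B + δ * M) :
    ∀ n : ℕ, ∀ t, n * T ≤ t → f t ≤ (k ^ n + δ / (1 - k)) * M := by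
  have hk' : 0 < 1 - k := sub_pos.2 hk
  have hδk : 0 ≤ δ / (1 - k) := div_nonneg hδ hk'.le
  intro n
  induction n with
  | zero =>
    intro t ht
    rw [Nat.cast_zero, zero_mul] at ht
    nlinarith [hle t ht]
  | succ n ih =>
    intro t ht
    have hnT : (n : ℝ) * T ≤ t - T := by push_cast at ht; linarith
    have hstep' := hstep t (by nlinarith) _ (by positivity)
      fun s hs => ih s (hnT.trans hs.1.le)
    have hgeom : k * (δ / (1 - k)) + δ = δ / (1 - k) := by
      field_simp [hk'.ne']
      ring
    calc f t ≤ k * ((k ^ n + δ / (1 - k)) * M) + δ * M := hstep'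
      _ = (k ^ (n + 1) + δ / (1 - k)) * M := by rw [pow_succ]; linear_combination M * hgeom

end DelayInequality

section MeasureEstimates

theorem tendsto_measureReal_Iic_atBot (μ : Measure ℝ) [IsFiniteMeasure μ] :
    Tendsto (fun a => μ.real (Iic a)) atBot (𝓝 0) := by
  have hlim := tendsto_measure_iInter_atBot (μ := μ)
    (fun a => measurableSet_Iic.nullMeasurableSet) (fun _ _ => Iic_subset_Iic.2)
    ⟨0, measure_ne_top μ _⟩
  rw [iInter_Iic_eq_empty_iff.2 (by simp [not_bddBelow_univ]), measure_empty] at hlim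
  exact (ENNReal.tendsto_toReal ENNReal.zero_ne_top).comp hlim

theorem norm_setIntegral_Iic_le {E : Type*} [NormedAddCommGroup E] [NormedSpace ℝ E]
    {μ : Measure ℝ} [IsFiniteMeasure μ] {f : ℝ → E} (hf : AEStronglyMeasurable f μ)
    {a b B₁ B₂ : ℝ} (hab : a ≤ b) (h₁ : ∀ s ∈ Ioc a b, ‖f s‖ ≤ B₁) (h₂ : ∀ s ≤ a, ‖f s‖ ≤ B₂) :
    ‖∫ s in Iic b, f s ∂μ‖ ≤ B₁ * μ.real (Ioc a b) + B₂ * μ.real (Iic a) := by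
  have hint₁ : IntegrableOn f (Ioc a b) μ := Measure.integrableOn_of_bounded (measure_ne_top μ _)
    hf ((ae_restrict_iff' measurableSet_Ioc).2 (.of_forall h₁))
  have hint₂ : IntegrableOn f (Iic a) μ := Measure.integrableOn_of_bounded (measure_ne_top μ _)
    hf ((ae_restrict_iff' measurableSet_Iic).2 (.of_forall h₂))
  rw [← Iic_union_Ioc_eq_Iic hab,
    setIntegral_union (Iic_disjoint_Ioc le_rfl) measurableSet_Ioc hint₂ hint₁, add_comm]
  exact (norm_add_le _ _).trans <| add_le_add
    (norm_setIntegral_le_of_norm_le_const (measure_lt_top μ _) h₁)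
    (norm_setIntegral_le_of_norm_le_const (measure_lt_top μ _) h₂)

variable {m : ℕ} {ν : Fin m → Fin m → Measure ℝ} [∀ i j, IsFiniteMeasure (ν i j)]
  {x : ℝ → Fin m → ℝ} {k : ℝ}

theorem norm_le_of_eq_sum_setIntegral (hx : Continuous x) {t T δ B₁ B₂ : ℝ} (hT : 0 ≤ T)
    (hk₀ : 0 ≤ k) (hδ₀ : 0 ≤ δ) (hB₁ : 0 ≤ B₁) (hB₂ : 0 ≤ B₂)
    (hk : ∀ i, ∑ j, (ν i j).real (Iic 0) ≤ k) (hδ : ∀ i, ∑ j, (ν i j).real (Iic (-T)) ≤ δ)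
    (h₁ : ∀ s ∈ Ioc (t - T) t, ‖x s‖ ≤ B₁) (h₂ : ∀ s ≤ t - T, ‖x s‖ ≤ B₂)
    (hid : ∀ i, x t i = ∑ j, ∫ s in Iic 0, x (t + s) j ∂ν i j) :
    ‖x t‖ ≤ k * B₁ + δ * B₂ := by
  refine (pi_norm_le_iff_of_nonneg (by positivity)).2 fun i => ?_
  have hj (j : Fin m) : ‖∫ s in Iic 0, x (t + s) j ∂ν i j‖ ≤
      B₁ * (ν i j).real (Iic 0) + B₂ * (ν i j).real (Iic (-T)) := by
    refine (norm_setIntegral_Iic_le (by fun_prop) (neg_nonpos.2 hT) (fun s hs => ?_)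
      (fun s hs => ?_)).trans (by gcongr; exacts [measure_ne_top _ _, Ioc_subset_Iic_self])
    · exact (norm_le_pi_norm _ j).trans (h₁ _ ⟨by linarith [hs.1], by linarith [hs.2]⟩)
    · exact (norm_le_pi_norm _ j).trans (h₂ _ (by linarith))
  calc ‖x t i‖ ≤ ∑ j, ‖∫ s in Iic 0, x (t + s) j ∂ν i j‖ := by rw [hid i]; exact norm_sum_le _ _
    _ ≤ ∑ j, (B₁ * (ν i j).real (Iic 0) + B₂ * (ν i j).real (Iic (-T))) :=
      Finset.sum_le_sum fun j _ => hj j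
    _ = B₁ * ∑ j, (ν i j).real (Iic 0) + B₂ * ∑ j, (ν i j).real (Iic (-T)) := by
      rw [Finset.sum_add_distrib, Finset.mul_sum, Finset.mul_sum]
    _ ≤ k * B₁ + δ * B₂ := by nlinarith [hk i, hδ i]

end MeasureEstimates

section Solutions

variable {m : ℕ} {ν : Fin m → Fin m → Measure ℝ} {x : ℝ → Fin m → ℝ}

theorem supNorm_nonneg : 0 ≤ supNorm m x :=
  Real.iSup_nonneg fun _ => norm_nonneg _

theorem norm_le_supNorm (hbdd : ∃ C, ∀ s ≤ 0, ‖x s‖ ≤ C) {s : ℝ} (hs : s ≤ 0) :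
    ‖x s‖ ≤ supNorm m x := by
  obtain ⟨C, hC⟩ := hbdd
  exact le_ciSup (f := fun s : Iic (0 : ℝ) => ‖x s‖) ⟨C, forall_mem_range.2 fun s => hC s s.2⟩
    ⟨s, hs⟩

theorem eq_sum_setIntegral_of_Dop_shift_eq_zero {t : ℝ}
    (h : Dop m ν (fun _ _ => 0) (shift m x t) = 0) (i : Fin m) :
    x t i = ∑ j, ∫ s in Iic 0, x (t + s) j ∂ν i j := by
  simpa [Dop, shift, sub_eq_zero] using congrFun h i

variable [∀ i j, IsFiniteMeasure (ν i j)] {k : ℝ}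

theorem norm_le_supNorm_of_eq_sum_setIntegral (hx : Continuous x)
    (hbdd : ∃ C, ∀ s ≤ 0, ‖x s‖ ≤ C) (hk₀ : 0 ≤ k) (hk₁ : k < 1)
    (hk : ∀ i, ∑ j, (ν i j).real (Iic 0) ≤ k)
    (hid : ∀ t, 0 ≤ t → ∀ i, x t i = ∑ j, ∫ s in Iic 0, x (t + s) j ∂ν i j) (t : ℝ) :
    ‖x t‖ ≤ supNorm m x := by
  refine le_of_le_mul_of_past_le (f := fun t => ‖x t‖) hx.norm hk₁ supNorm_nonneg
    (fun s hs => norm_le_supNorm hbdd hs) (fun t ht B hB => ?_) t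
  have hest := norm_le_of_eq_sum_setIntegral hx le_rfl hk₀ hk₀ le_rfl
    ((norm_nonneg _).trans (hB t le_rfl)) hk (by simpa using hk)
    (fun s hs => absurd hs.2 (by simpa using hs.1)) (by simpa using hB) (hid t ht)
  simpa using hest

theorem exists_forall_ge_norm_le_mul_supNorm (hk₀ : 0 ≤ k) (hk₁ : k < 1)
    (hk : ∀ i, ∑ j, (ν i j).real (Iic 0) ≤ k) {ε : ℝ} (hε : 0 < ε) :
    ∃ τ, ∀ x : ℝ → Fin m → ℝ, Continuous x → (∃ C, ∀ s ≤ 0, ‖x s‖ ≤ C) →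
      (∀ t, 0 ≤ t → ∀ i, x t i = ∑ j, ∫ s in Iic 0, x (t + s) j ∂ν i j) →
      ∀ t, τ ≤ t → ‖x t‖ ≤ ε * supNorm m x := by
  set δ := ε * (1 - k) / 2
  have hδ : 0 < δ := by have := sub_pos.2 hk₁; positivity
  have htail : ∀ i, Tendsto (fun T => ∑ j, (ν i j).real (Iic (-T))) atTop (𝓝 0) := fun i => by
    simpa using tendsto_finsetSum Finset.univ fun j _ =>
      (tendsto_measureReal_Iic_atBot (ν i j)).comp tendsto_neg_atTop_atBot
  obtain ⟨T, hT, hδT⟩ := ((eventually_ge_atTop 0).and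
    (eventually_all.2 fun i => (htail i).eventually (eventually_le_nhds hδ))).exists
  obtain ⟨n, hn⟩ := ((tendsto_pow_atTop_nhds_zero_of_lt_one hk₀ hk₁).eventually
    (eventually_le_nhds (half_pos hε))).exists
  refine ⟨n * T, fun x hx hbdd hid t ht => ?_⟩
  have hglobal := norm_le_supNorm_of_eq_sum_setIntegral hx hbdd hk₀ hk₁ hk hid
  have hdecay := le_pow_add_of_delay_le (f := fun t => ‖x t‖) hk₀ hk₁ hδ.le hT supNorm_nonneg
    (fun t _ => hglobal t) (fun t ht B hB h₁ => norm_le_of_eq_sum_setIntegral hx hT hk₀ hδ.le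
      hB supNorm_nonneg hk hδT h₁ (fun s _ => hglobal s) (hid t ht)) n t ht
  have hδk : δ / (1 - k) = ε / 2 := by
    simp only [δ]
    field_simp [(sub_pos.2 hk₁).ne']
  calc ‖x t‖ ≤ (k ^ n + δ / (1 - k)) * supNorm m x := hdecay
    _ ≤ ε * supNorm m x := mul_le_mul_of_nonneg_right (by linarith) supNorm_nonneg

end Solutions

theorem statement12_general (m : ℕ) (ν : Fin m → Fin m → Measure ℝ)
    (hfin : ∀ i j, ν i j Set.univ ≠ ⊤)
    (hsum : ∀ i, ∑ j : Fin m, (ν i j (Set.Iic 0)).toReal < 1) :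
    IsStableOp m (Dop m ν (fun _ _ => 0)) := by
  have : ∀ i j, IsFiniteMeasure (ν i j) := fun i j => ⟨(hfin i j).lt_top⟩
  obtain ⟨k, hk₀, hk₁, hk⟩ := exists_le_of_forall_lt_of_finite zero_lt_one hsum
  let Sol := {x : ℝ → Fin m → ℝ // Continuous x ∧ IsBU m x ∧
    ∀ t, 0 ≤ t → Dop m ν (fun _ _ => 0) (shift m x t) = 0}
  have hid (x : Sol) (t : ℝ) (ht : 0 ≤ t) (i : Fin m) :
      x.1 t i = ∑ j, ∫ s in Iic 0, x.1 (t + s) j ∂ν i j :=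
    eq_sum_setIntegral_of_Dop_shift_eq_zero (x.2.2.2 t ht) i
  obtain ⟨c, hc, hc₀, hc_lim, hc_bound⟩ := exists_continuous_decay_bound
    (fun (x : Sol) t => ‖x.1 t‖) (fun x => supNorm m x.1) (fun _ => supNorm_nonneg)
    (fun x t _ => norm_le_supNorm_of_eq_sum_setIntegral x.2.1 x.2.2.1.1 hk₀ hk₁ hk (hid x) t)
    (fun ε hε => (exists_forall_ge_norm_le_mul_supNorm hk₀ hk₁ hk hε).imp fun τ hτ x =>
      hτ x.1 x.2.1 x.2.2.1.1 (hid x))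
  exact ⟨c, hc.continuousOn, fun t _ => hc₀ t, hc_lim, fun x hx hBU hD =>
    hc_bound ⟨x, hx, hBU, hD⟩⟩

/-- If the `ν_ij` are positive regular Borel measures on
`(-∞,0]` with finite total variation, `ν_ij({0}) = 0` and
`∑_j ν_ij((-∞,0]) < 1` for each `i`, then the operator
`D_i x = x_i(0) - ∑_j ∫_{-∞}^0 x_j(s) dν_ij(s)` is stable. -/
theorem statement12 (m : ℕ) (ν : Fin m → Fin m → Measure ℝ)
    (hfin : ∀ i j, ν i j Set.univ ≠ ⊤)
    (hsupp : ∀ i j, ν i j (Set.Ioi 0) = 0)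
    (h0 : ∀ i j, ν i j {0} = 0)
    (hsum : ∀ i, ∑ j : Fin m, (ν i j (Set.Iic 0)).toReal < 1) :
    IsStableOp m (Dop m ν (fun _ _ => 0)) :=
  statement12_general m ν hfin hsum
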